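/- arXiv:1309.4237 — 3 statements merged into one kernel-verified Lean document; each statement's English description precedes it below -/
import Mathlib

section
/- For all n ≥ 0, the identity x^n = ∑_{k=0}^{n} JS(n,k;z) ∏_{i=0}^{k-1}(x - i(z+i)) holds as polynomials in x (with coefficients polynomials in z). -/
/-! Multiplication by `x` acts on the Newton basis `P_k = ∏_{i<k} (x - a_i)` by
`x P_k = P_{k+1} + a_k P_k`, so the coefficients of `x^n` in that basis satisfy
`S(n+1,k) = S(n,k-1) + a_k S(n,k)`. With the nodes `a_k = k(k+z)` this is the defining
recurrence of `JS(n,k;z)`. -/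

open Polynomial Finset

/-- The Jacobi-Stirling numbers of the second kind `JS(n,k;z)`, as polynomials in `z`. -/
noncomputable def JS : ℕ → ℕ → Polynomial ℤ
  | 0, 0 => 1
  | 0, _+1 => 0
  | _+1, 0 => 0
  | n+1, k+1 => JS n k + (C ((k : ℤ) + 1) * (C ((k : ℤ) + 1) + X)) * JS n (k+1)

section NewtonBasis

variable {R : Type*} [CommRing R] (a : ℕ → R)

noncomputable def newtonBasis (k : ℕ) : R[X] :=
  ∏ i ∈ range k, (X - C (a i))

theorem X_mul_newtonBasis (k : ℕ) :
    X * newtonBasis a k = newtonBasis a (k + 1) + C (a k) * newtonBasis a k := by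
  rw [newtonBasis, newtonBasis, prod_range_succ]
  ring

variable {a} {S : ℕ → ℕ → R} (hS0 : ∀ k, S 0 (k + 1) = 0)
  (hS : ∀ n k, S (n + 1) (k + 1) = S n k + a (k + 1) * S n (k + 1))
include hS0 hS

theorem eq_zero_of_lt_of_recurrence {n k : ℕ} (h : n < k) : S n k = 0 := by
  induction n generalizing k with
  | zero => obtain ⟨k, rfl⟩ := Nat.exists_eq_succ_of_ne_zero h.ne'; exact hS0 k
  | succ n ih =>
    obtain ⟨k, rfl⟩ := Nat.exists_eq_succ_of_ne_zero (by omega : k ≠ 0)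
    rw [hS, ih (by omega), ih (by omega), mul_zero, add_zero]

theorem X_pow_eq_sum_newtonBasis_of_recurrence (hS00 : S 0 0 = 1)
    (hSn0 : ∀ n, S (n + 1) 0 = a 0 * S n 0) (n : ℕ) :
    (X : R[X]) ^ n = ∑ k ∈ range (n + 1), C (S n k) * newtonBasis a k := by
  induction n with
  | zero => simp [hS00, newtonBasis]
  | succ n ih =>
    have hlast : S n (n + 1) = 0 := eq_zero_of_lt_of_recurrence hS0 hS n.lt_succ_self
    calc (X : R[X]) ^ (n + 1)
        = ∑ k ∈ range (n + 1), C (S n k) * (X * newtonBasis a k) := by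
          rw [pow_succ', ih, mul_sum]; exact sum_congr rfl fun k _ => by ring
      _ = ∑ k ∈ range (n + 1), C (S n k) * newtonBasis a (k + 1)
            + ∑ k ∈ range (n + 2), C (a k * S n k) * newtonBasis a k := by
          simp only [X_mul_newtonBasis, mul_add, sum_add_distrib, sum_range_succ _ (n + 1),
            hlast, mul_zero, C_0, zero_mul, add_zero, C_mul]
          congr 1; exact sum_congr rfl fun k _ => by ring
      _ = ∑ k ∈ range (n + 2), C (S (n + 1) k) * newtonBasis a k := by
          rw [sum_range_succ' _ (n + 1), sum_range_succ' (fun k => C (S (n + 1) k) * _),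
            hSn0, ← add_assoc, ← sum_add_distrib]
          simp only [hS, C_add, add_mul]

end NewtonBasis

theorem JS_succ_succ (n k : ℕ) :
    JS (n + 1) (k + 1) =
      JS n k + C ((k + 1 : ℕ) : ℤ) * (X + C ((k + 1 : ℕ) : ℤ)) * JS n (k + 1) := by
  rw [JS]; push_cast; ring

/-- `x^n = ∑_{k=0}^{n} JS(n,k;z) ∏_{i=0}^{k-1}(x - i(z+i))`, as polynomials in `x`
with coefficients in `ℤ[z]`. -/
theorem pow_eq_sum_JS (n : ℕ) :
    (X : Polynomial (Polynomial ℤ)) ^ n =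
      ∑ k ∈ Finset.range (n + 1),
        C (JS n k) *
          ∏ i ∈ Finset.range k,
            ((X : Polynomial (Polynomial ℤ)) - C (C (i : ℤ) * (Polynomial.X + C (i : ℤ)))) :=
  X_pow_eq_sum_newtonBasis_of_recurrence (a := fun i => C (i : ℤ) * (X + C (i : ℤ)))
    (fun _ => rfl) JS_succ_succ rfl (fun _ => by simp [JS]) n
end

section
/- For every fixed k ≥ 0, the sequence {JS(n,k;z-1)}_{n≥k} is strongly z-log-concave: for all k ≤ m ≤ n with m ≥ k+1, the polynomial JS(n,k';z-1) entries satisfy that JS(m,k;z-1)·JS(n,k;z-1) − JS(m-1,k;z-1)·JS(n+1,k;z-1) has nonnegative coefficients as a polynomial in z. -/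
/-!
After the substitution `z ↦ z - 1` the recurrence reads
`JS(n+1,k+1;z-1) = JS(n,k;z-1) + (k+1)(k+z)·JS(n,k+1;z-1)`, with a weight that has nonnegative
coefficients. Expanding both entries of the first row of a `2 × 2` minor
`JS(a,k;z-1)·JS(b,l;z-1) - JS(a,l;z-1)·JS(b,k;z-1)` (with `k ≤ l`, `a ≤ b`) by this recurrence
writes it as a combination, with coefficientwise nonnegative weights, of four minors of the same
shape one row lower, so induction on `a` shows that all these minors have nonnegative
coefficients. The log-concavity difference for column `k+1` is, by one more application of the
recurrence, the minor with rows `m-1, n` and columns `k, k+1`.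
-/

open Polynomial Finset

/-- `JS(n,k;z-1)`: the Jacobi-Stirling number of the second kind with `z` replaced by `z-1`. -/
noncomputable def JSm (n k : ℕ) : Polynomial ℤ := (JS n k).comp (X - 1)

namespace Polynomial

variable {R : Type*} [Semiring R] [PartialOrder R] [IsOrderedRing R]

variable (R) in
def nonnegCoeffs : Subsemiring R[X] where
  carrier := {p | ∀ i, 0 ≤ p.coeff i}
  zero_mem' _ := by simp
  one_mem' i := by rw [coeff_one]; split_ifs <;> simp
  add_mem' hp hq i := by rw [coeff_add]; exact add_nonneg (hp i) (hq i)
  mul_mem' hp hq i := by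
    rw [coeff_mul]; exact sum_nonneg fun x _ => mul_nonneg (hp _) (hq _)

theorem mem_nonnegCoeffs {p : R[X]} : p ∈ nonnegCoeffs R ↔ ∀ i, 0 ≤ p.coeff i := Iff.rfl

theorem C_mem_nonnegCoeffs {a : R} (ha : 0 ≤ a) : C a ∈ nonnegCoeffs R := fun i => by
  rw [coeff_C]; split_ifs <;> simp [ha]

theorem X_mem_nonnegCoeffs : (X : R[X]) ∈ nonnegCoeffs R := fun i => by
  rw [coeff_X]; split_ifs <;> simp

end Polynomial

/-- `k(k+z)` from the recurrence for `JS`, at `k+1` and `z-1`. -/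
noncomputable def JSmWeight (k : ℕ) : ℤ[X] := C ((k : ℤ) + 1) * (C (k : ℤ) + X)

theorem JSmWeight_mem_nonnegCoeffs (k : ℕ) : JSmWeight k ∈ nonnegCoeffs ℤ :=
  mul_mem (C_mem_nonnegCoeffs (by positivity))
    (add_mem (C_mem_nonnegCoeffs (by positivity)) X_mem_nonnegCoeffs)

@[simp]
theorem JSm_zero_zero : JSm 0 0 = 1 := by simp [JSm, JS]

@[simp]
theorem JSm_zero_succ (k : ℕ) : JSm 0 (k + 1) = 0 := by simp [JSm, JS]

@[simp]
theorem JSm_succ_zero (n : ℕ) : JSm (n + 1) 0 = 0 := by simp [JSm, JS]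

theorem JSm_succ_succ (n k : ℕ) :
    JSm (n + 1) (k + 1) = JSm n k + JSmWeight k * JSm n (k + 1) := by
  simp only [JSm, JS, JSmWeight, add_comp, mul_comp, C_comp, X_comp, one_comp, C_add, C_1]
  ring

theorem JSm_mem_nonnegCoeffs (n k : ℕ) : JSm n k ∈ nonnegCoeffs ℤ := by
  induction n generalizing k with
  | zero => cases k <;> simp
  | succ n ih =>
    cases k with
    | zero => simp
    | succ k =>
      rw [JSm_succ_succ]
      exact add_mem (ih k) (mul_mem (JSmWeight_mem_nonnegCoeffs k) (ih (k + 1)))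

noncomputable def JSmMinor (a b k l : ℕ) : ℤ[X] := JSm a k * JSm b l - JSm a l * JSm b k

theorem JSmMinor_succ_succ (a b k l : ℕ) :
    JSmMinor (a + 1) (b + 1) (k + 1) (l + 1) =
      JSmMinor a b k l + JSmWeight l * JSmMinor a b k (l + 1) +
        JSmWeight k * JSmMinor a b (k + 1) l +
          JSmWeight k * JSmWeight l * JSmMinor a b (k + 1) (l + 1) := by
  simp only [JSmMinor, JSm_succ_succ]
  ring

theorem JSmMinor_mem_nonnegCoeffs {a b k l : ℕ} (hkl : k ≤ l) (hab : a ≤ b) :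
    JSmMinor a b k l ∈ nonnegCoeffs ℤ := by
  induction a generalizing b k l with
  | zero =>
    rcases k with _ | k
    · rcases l with _ | l
      · simp [JSmMinor]
      · simpa [JSmMinor] using JSm_mem_nonnegCoeffs b (l + 1)
    · obtain ⟨l, rfl⟩ : ∃ l', l = l' + 1 := ⟨l - 1, by omega⟩
      simp [JSmMinor]
  | succ a ih =>
    obtain ⟨b, rfl⟩ : ∃ b', b = b' + 1 := ⟨b - 1, by omega⟩
    rcases hkl.eq_or_lt with rfl | hlt
    · simp [JSmMinor]
    rcases k with _ | k
    · simp [JSmMinor]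
    obtain ⟨l, rfl⟩ : ∃ l', l = l' + 1 := ⟨l - 1, by omega⟩
    have hab : a ≤ b := by omega
    have hw := JSmWeight_mem_nonnegCoeffs
    rw [JSmMinor_succ_succ]
    refine add_mem (add_mem (add_mem ?_ ?_) ?_) ?_
    · exact ih (by omega) hab
    · exact mul_mem (hw l) (ih (by omega) hab)
    · exact mul_mem (hw k) (ih (by omega) hab)
    · exact mul_mem (mul_mem (hw k) (hw l)) (ih (by omega) hab)

theorem JSm_log_concave_diff_eq_JSmMinor (m n k : ℕ) :
    JSm (m + 1) (k + 1) * JSm n (k + 1) - JSm m (k + 1) * JSm (n + 1) (k + 1) =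
      JSmMinor m n k (k + 1) := by
  simp only [JSmMinor, JSm_succ_succ]
  ring

/-- For fixed `k`, the sequence `{JS(n,k;z-1)}_{n≥k}` is strongly `z`-log-concave:
for `k + 1 ≤ m ≤ n`, the polynomial `JS(m,k;z-1)·JS(n,k;z-1) − JS(m-1,k;z-1)·JS(n+1,k;z-1)`
has nonnegative coefficients. -/
theorem JSm_column_strongly_log_concave (k m n : ℕ) (hm : k + 1 ≤ m) (hmn : m ≤ n) (i : ℕ) :
    0 ≤ (JSm m k * JSm n k - JSm (m - 1) k * JSm (n + 1) k).coeff i := by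
  obtain ⟨m, rfl⟩ : ∃ m', m = m' + 1 := ⟨m - 1, by omega⟩
  rw [Nat.add_sub_cancel]
  rcases k with _ | k
  · simp
  · rw [JSm_log_concave_diff_eq_JSmMinor]
    exact mem_nonnegCoeffs.mp (JSmMinor_mem_nonnegCoeffs k.le_succ (by omega)) i
end

section
/- Under the hypotheses of the triangular recurrence lemma (T_{n,k} = a_{n,k} T_{n-1,k} + b_{n,k} T_{n-1,k-1} with monotone nonnegative coefficients and strong x-log-concavity of each row), for fixed j ≥ 0 and n ≥ m ≥ 0, if c_{j,i} ≥ c_{j,i-1} coefficientwise for all i ≥ 1, then ∑_{i=0}^j (c_{j,j-i} − c_{j,i})·T_{n,j-i}·T_{m,i} has nonnegative coefficients. -/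
/-!
Pairing the terms `i` and `j - i` turns twice the sum into
`∑ (c_{j-i} - c_i) (T_{n,j-i} T_{m,i} - T_{n,i} T_{m,j-i})`, whose two factors have the same
sign: `c` is increasing, and `T_{n,l} T_{m,k} ≥ T_{n,k} T_{m,l}` for `k ≤ l` and `m ≤ n`.
That inequality, and its companion `T_{n,k} T_{m,l} ≥ T_{n,k-1} T_{m,l+1}` for `1 ≤ k ≤ l`, are
proved by induction on `n ≥ m`: expanding row `n + 1` by the recurrence writes each difference
as a combination of the same differences for row `n` with the nonnegative coefficients
`a_k`, `a_l - a_k`, `b_k`, `b_l - b_k`. The companion's induction starts from the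
log-concavity of row `m`.
-/

open Finset

def CoeffNonneg {d : ℕ} (f : MvPolynomial (Fin d) ℝ) : Prop :=
  ∀ mon, 0 ≤ f.coeff mon

namespace CoeffNonneg

variable {d : ℕ} {f g : MvPolynomial (Fin d) ℝ}

lemma zero : CoeffNonneg (0 : MvPolynomial (Fin d) ℝ) := fun _ => by simp

lemma add (hf : CoeffNonneg f) (hg : CoeffNonneg g) : CoeffNonneg (f + g) := fun mon => by
  rw [MvPolynomial.coeff_add]
  exact add_nonneg (hf mon) (hg mon)

lemma mul (hf : CoeffNonneg f) (hg : CoeffNonneg g) : CoeffNonneg (f * g) := fun mon => by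
  rw [MvPolynomial.coeff_mul]
  exact sum_nonneg fun _ _ => mul_nonneg (hf _) (hg _)

lemma mul_of_neg (hf : CoeffNonneg (-f)) (hg : CoeffNonneg (-g)) : CoeffNonneg (f * g) := by
  simpa only [neg_mul_neg] using hf.mul hg

lemma sum {ι : Type*} {s : Finset ι} {F : ι → MvPolynomial (Fin d) ℝ}
    (h : ∀ i ∈ s, CoeffNonneg (F i)) : CoeffNonneg (∑ i ∈ s, F i) := fun mon => by
  rw [MvPolynomial.coeff_sum]
  exact sum_nonneg fun i hi => h i hi mon

lemma of_add_self (h : CoeffNonneg (f + f)) : CoeffNonneg f := fun mon => by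
  have := h mon
  rw [MvPolynomial.coeff_add] at this
  linarith

lemma sum_range_of_add_reflect {j : ℕ} {F : ℕ → MvPolynomial (Fin d) ℝ}
    (h : ∀ i ≤ j, CoeffNonneg (F i + F (j - i))) : CoeffNonneg (∑ i ∈ range (j + 1), F i) := by
  refine of_add_self ?_
  nth_rewrite 2 [← sum_range_reflect]
  rw [← sum_add_distrib]
  exact sum fun i hi => by simpa using h i (by simpa [Nat.lt_succ_iff] using hi)

lemma sub_of_le_of_sub_pred_int {N : ℤ} {f : ℤ → MvPolynomial (Fin d) ℝ}
    (h : ∀ k, 1 ≤ k → k ≤ N → CoeffNonneg (f k - f (k - 1)))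
    {k l : ℤ} (hk : 0 ≤ k) (hkl : k ≤ l) (hl : l ≤ N) : CoeffNonneg (f l - f k) := by
  induction l, hkl using Int.leInduction with
  | base => simpa using zero
  | succ l hkl ih =>
    have step := h (l + 1) (by omega) hl
    rw [add_sub_cancel_right] at step
    rw [← sub_add_sub_cancel _ (f l)]
    exact step.add (ih (by omega))

lemma sub_of_le_of_sub_pred_nat {f : ℕ → MvPolynomial (Fin d) ℝ}
    (h : ∀ i, 1 ≤ i → CoeffNonneg (f i - f (i - 1))) {k l : ℕ} (hkl : k ≤ l) :
    CoeffNonneg (f l - f k) := by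
  induction l, hkl using Nat.le_induction with
  | base => simpa using zero
  | succ l _ ih =>
    have step := h (l + 1) (by omega)
    rw [Nat.add_sub_cancel] at step
    rw [← sub_add_sub_cancel _ (f l)]
    exact step.add ih

lemma of_sub_pred_int {N : ℤ} (hN : 1 ≤ N) {f : ℤ → MvPolynomial (Fin d) ℝ}
    (h : ∀ k, 1 ≤ k → k ≤ N → CoeffNonneg (f (k - 1)) ∧ CoeffNonneg (f k - f (k - 1)))
    {k : ℤ} (hk : 0 ≤ k) (hkN : k ≤ N) : CoeffNonneg (f k) := by
  have h0 : CoeffNonneg (f 0) := (h 1 le_rfl hN).1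
  rw [← sub_add_cancel (f k) (f 0)]
  exact (sub_of_le_of_sub_pred_int (fun k hk hkN => (h k hk hkN).2) le_rfl hk hkN).add h0

lemma recurrence_step {a₀ a₁ b₀ b₁ x₀ x₁ x₂ x₃ y₀ y₁ : MvPolynomial (Fin d) ℝ}
    (ha₀ : CoeffNonneg a₀) (ha : CoeffNonneg (a₁ - a₀)) (hb₀ : CoeffNonneg b₀)
    (hb : CoeffNonneg (b₁ - b₀)) (hx₀ : CoeffNonneg x₀) (hx₁ : CoeffNonneg x₁)
    (hy₀ : CoeffNonneg y₀) (h₀ : CoeffNonneg (x₀ * y₀ - x₂ * y₁))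
    (h₁ : CoeffNonneg (x₁ * y₀ - x₃ * y₁)) :
    CoeffNonneg ((a₁ * x₀ + b₁ * x₁) * y₀ - (a₀ * x₂ + b₀ * x₃) * y₁) := by
  rw [show (a₁ * x₀ + b₁ * x₁) * y₀ - (a₀ * x₂ + b₀ * x₃) * y₁
      = a₀ * (x₀ * y₀ - x₂ * y₁) + (a₁ - a₀) * (x₀ * y₀)
        + b₀ * (x₁ * y₀ - x₃ * y₁) + (b₁ - b₀) * (x₁ * y₀) by ring]
  exact (((ha₀.mul h₀).add (ha.mul (hx₀.mul hy₀))).add (hb₀.mul h₁)).add (hb.mul (hx₁.mul hy₀))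

end CoeffNonneg

structure IsTriangularRecurrence {d : ℕ} (T a b : ℕ → ℤ → MvPolynomial (Fin d) ℝ) : Prop where
  eq_zero : ∀ (n : ℕ) (k : ℤ), k < 0 ∨ (n : ℤ) < k → T n k = 0
  nonneg : ∀ (n : ℕ) (k : ℤ), CoeffNonneg (T n k)
  recurrence : ∀ (n : ℕ) (k : ℤ), 0 ≤ k → k ≤ (n : ℤ) + 1 →
    T (n + 1) k = a (n + 1) k * T n k + b (n + 1) k * T n (k - 1)
  a_mono : ∀ (n : ℕ) (k : ℤ), 1 ≤ k → k ≤ (n : ℤ) →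
    CoeffNonneg (a n (k - 1)) ∧ CoeffNonneg (a n k - a n (k - 1))
  b_mono : ∀ (n : ℕ) (k : ℤ), 1 ≤ k → k ≤ (n : ℤ) →
    CoeffNonneg (b n (k - 1)) ∧ CoeffNonneg (b n k - b n (k - 1))
  log_concave : ∀ (n : ℕ) (k l : ℤ), 1 ≤ k → k ≤ l →
    CoeffNonneg (T n k * T n l - T n (k - 1) * T n (l + 1))

namespace IsTriangularRecurrence

variable {d : ℕ} {T a b : ℕ → ℤ → MvPolynomial (Fin d) ℝ}

lemma log_concave_of_le (hT : IsTriangularRecurrence T a b) {m n : ℕ} (hmn : m ≤ n)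
    {k l : ℤ} (hk : 1 ≤ k) (hkl : k ≤ l) :
    CoeffNonneg (T n k * T m l - T n (k - 1) * T m (l + 1)) := by
  induction n, hmn using Nat.le_induction generalizing k l with
  | base => exact hT.log_concave m k l hk hkl
  | succ n hmn ih =>
    rcases lt_or_ge (m : ℤ) l with hml | hlm
    · rw [hT.eq_zero m l (.inr hml), hT.eq_zero m (l + 1) (.inr (by omega)), mul_zero,
        mul_zero, sub_zero]
      exact .zero
    have hkn : k ≤ ((n + 1 : ℕ) : ℤ) := by push_cast; omega
    obtain ⟨ha, ha'⟩ := hT.a_mono (n + 1) k hk hkn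
    obtain ⟨hb, hb'⟩ := hT.b_mono (n + 1) k hk hkn
    have lower : CoeffNonneg (T n (k - 1) * T m l - T n (k - 1 - 1) * T m (l + 1)) := by
      rcases hk.eq_or_lt with rfl | hk
      · rw [hT.eq_zero n (1 - 1 - 1) (.inl (by norm_num)), zero_mul, sub_zero]
        exact (hT.nonneg n _).mul (hT.nonneg m l)
      · exact ih (by omega) (by omega)
    rw [hT.recurrence n k (by omega) (by omega), hT.recurrence n (k - 1) (by omega) (by omega)]
    exact .recurrence_step ha ha' hb hb' (hT.nonneg n k) (hT.nonneg n _) (hT.nonneg m l)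
      (ih hk hkl) lower

lemma ratio_monotone (hT : IsTriangularRecurrence T a b) {m n : ℕ} (hmn : m ≤ n)
    {k l : ℤ} (hkl : k ≤ l) : CoeffNonneg (T n l * T m k - T n k * T m l) := by
  induction n, hmn using Nat.le_induction generalizing k l with
  | base => simpa [mul_comm] using CoeffNonneg.zero
  | succ n hmn ih =>
    rcases lt_or_ge k 0 with hk | hk
    · rw [hT.eq_zero m k (.inl hk), hT.eq_zero (n + 1) k (.inl hk), mul_zero, zero_mul, sub_zero]
      exact .zero
    rcases lt_or_ge ((n + 1 : ℕ) : ℤ) l with hl | hl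
    · rw [hT.eq_zero (n + 1) l (.inr hl), hT.eq_zero m l (.inr (by omega)), zero_mul, mul_zero,
        sub_zero]
      exact .zero
    have hN : (1 : ℤ) ≤ ((n + 1 : ℕ) : ℤ) := by push_cast; omega
    have lower : CoeffNonneg (T n (l - 1) * T m k - T n (k - 1) * T m l) := by
      rcases hkl.eq_or_lt with rfl | hkl
      · simpa using CoeffNonneg.zero
      rcases hk.eq_or_lt with rfl | hk
      · rw [hT.eq_zero n (0 - 1) (.inl (by norm_num)), zero_mul, sub_zero]
        exact (hT.nonneg n _).mul (hT.nonneg m _)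
      rw [← sub_add_sub_cancel _ (T n k * T m (l - 1))]
      have hlc := hT.log_concave_of_le hmn (k := k) (l := l - 1) (by omega) (by omega)
      rw [sub_add_cancel] at hlc
      exact (ih (by omega)).add hlc
    rw [hT.recurrence n l (by omega) (by omega), hT.recurrence n k hk (by omega)]
    exact .recurrence_step
      (.of_sub_pred_int hN (hT.a_mono (n + 1)) hk (hkl.trans hl))
      (.sub_of_le_of_sub_pred_int (fun k hk hkn => (hT.a_mono (n + 1) k hk hkn).2) hk hkl hl)
      (.of_sub_pred_int hN (hT.b_mono (n + 1)) hk (hkl.trans hl))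
      (.sub_of_le_of_sub_pred_int (fun k hk hkn => (hT.b_mono (n + 1) k hk hkn).2) hk hkl hl)
      (hT.nonneg n l) (hT.nonneg n _) (hT.nonneg m k) (ih hkl) lower

end IsTriangularRecurrence

theorem triangular_recurrence_lemma_part_two_general (d : ℕ)
    (T a b : ℕ → ℤ → MvPolynomial (Fin d) ℝ)
    (hT0 : ∀ (n : ℕ) (k : ℤ), k < 0 ∨ (n : ℤ) < k → T n k = 0)
    (hTpos : ∀ (n : ℕ) (k : ℤ), CoeffNonneg (T n k))
    (hrec : ∀ (n : ℕ) (k : ℤ), 0 ≤ k → k ≤ (n : ℤ) + 1 →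
      T (n + 1) k = a (n + 1) k * T n k + b (n + 1) k * T n (k - 1))
    (ha : ∀ (n : ℕ) (k : ℤ), 1 ≤ k → k ≤ (n : ℤ) →
      CoeffNonneg (a n (k - 1)) ∧ CoeffNonneg (a n k - a n (k - 1)))
    (hb : ∀ (n : ℕ) (k : ℤ), 1 ≤ k → k ≤ (n : ℤ) →
      CoeffNonneg (b n (k - 1)) ∧ CoeffNonneg (b n k - b n (k - 1)))
    (hlc : ∀ (n : ℕ) (k l : ℤ), 1 ≤ k → k ≤ l →
      CoeffNonneg (T n k * T n l - T n (k - 1) * T n (l + 1)))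
    (j : ℕ) (c : ℕ → MvPolynomial (Fin d) ℝ)
    (hc : ∀ i : ℕ, 1 ≤ i → CoeffNonneg (c i - c (i - 1)))
    (m n : ℕ) (hmn : m ≤ n) :
    CoeffNonneg (∑ i ∈ Finset.range (j + 1),
      (c (j - i) - c i) * T n ((j : ℤ) - (i : ℤ)) * T m (i : ℤ)) := by
  have hT : IsTriangularRecurrence T a b := ⟨hT0, hTpos, hrec, ha, hb, hlc⟩
  refine CoeffNonneg.sum_range_of_add_reflect fun i hi => ?_
  rw [Nat.sub_sub_self hi, Nat.cast_sub hi, sub_sub_cancel,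
    show (c (j - i) - c i) * T n (j - i) * T m i + (c i - c (j - i)) * T n i * T m (j - i)
      = (c (j - i) - c i) * (T n (j - i) * T m i - T n i * T m (j - i)) by ring]
  rcases le_total i (j - i) with h | h
  · exact (CoeffNonneg.sub_of_le_of_sub_pred_nat hc h).mul
      (hT.ratio_monotone hmn (by omega))
  · refine .mul_of_neg (by simpa using CoeffNonneg.sub_of_le_of_sub_pred_nat hc h) ?_
    simpa using hT.ratio_monotone hmn (k := j - i) (l := i) (by omega)

/-- Under the hypotheses of the triangular recurrence lemma, for fixed `j ≥ 0` and
`n ≥ m ≥ 0`, if `c_{j,i} ≥ c_{j,i-1}` coefficientwise for all `i ≥ 1`, then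
`∑_{i=0}^j (c_{j,j-i} − c_{j,i})·T_{n,j-i}·T_{m,i}` has nonnegative coefficients. -/
theorem triangular_recurrence_lemma_part_two (d : ℕ)
    (T a b : ℕ → ℤ → MvPolynomial (Fin d) ℝ)
    (hT0 : ∀ (n : ℕ) (k : ℤ), k < 0 ∨ (n : ℤ) < k → T n k = 0)
    (hT1 : T 0 0 = 1)
    (hTpos : ∀ (n : ℕ) (k : ℤ), CoeffNonneg (T n k))
    (hrec : ∀ (n : ℕ) (k : ℤ), 0 ≤ k → k ≤ (n : ℤ) + 1 →
      T (n + 1) k = a (n + 1) k * T n k + b (n + 1) k * T n (k - 1))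
    (ha : ∀ (n : ℕ) (k : ℤ), 1 ≤ k → k ≤ (n : ℤ) →
      CoeffNonneg (a n (k - 1)) ∧ CoeffNonneg (a n k - a n (k - 1)))
    (hb : ∀ (n : ℕ) (k : ℤ), 1 ≤ k → k ≤ (n : ℤ) →
      CoeffNonneg (b n (k - 1)) ∧ CoeffNonneg (b n k - b n (k - 1)))
    (hlc : ∀ (n : ℕ) (k l : ℤ), 1 ≤ k → k ≤ l →
      CoeffNonneg (T n k * T n l - T n (k - 1) * T n (l + 1)))
    (j : ℕ) (c : ℕ → MvPolynomial (Fin d) ℝ)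
    (hc : ∀ i : ℕ, 1 ≤ i → CoeffNonneg (c i - c (i - 1)))
    (m n : ℕ) (hmn : m ≤ n) :
    CoeffNonneg (∑ i ∈ Finset.range (j + 1),
      (c (j - i) - c i) * T n ((j : ℤ) - (i : ℤ)) * T m (i : ℤ)) :=
  triangular_recurrence_lemma_part_two_general d T a b hT0 hTpos hrec ha hb hlc j c hc m n hmn
end
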